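/- Let T be a triangulated category with a non-degenerate t-structure which has derived injectives, and assume the heart T^♥ has a small separating family 𝒢 of objects (i.e. the functors Hom(G, −), G ∈ 𝒢, are jointly faithful). Then for any object E ∈ T the following are equivalent: (1) E is a derived injective; (2) E ∈ T_{≥0} and T(Z[-1], E) ≅ 0 for every Z ∈ T_{≥0}; (3) E ∈ T_{≥0} and T(Z[-n], E) ≅ 0 for every Z ∈ T^♥ and every n ≥ 1; (4) E ∈ T_{≥0}, H^0(E) is an injective object of T^♥, and T(G[-n], E) ≅ 0 for every G ∈ 𝒢 and every n ≥ 1. -/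

import Mathlib

/-!
A derived injective `E` represents `T^♥(H⁰(−), I)`, so every object with `H⁰ = 0` maps trivially
to it; this gives (1) ⇒ (2) ⇒ (3). For (3) ⇒ (4), the cone `Q` of a monomorphism `X ⟶ Y`
of the heart lies in the heart, and the vanishing of `T(Q⟦-1⟧, E)` lets maps `X ⟶ H⁰ E` extend
along `X ⟶ Y`. For (4) ⇒ (1), let `L` be the derived injective attached to `H⁰ E` and `φ : E ⟶ L`
the map corresponding to the identity. Its cone `Q` lies in `T_{≥0}`, and the separating family
shows inductively that `Q ∈ T_{≥m}` for all `m`; by non-degeneracy `Q = 0`, so `E ≅ L`.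
-/

open CategoryTheory Limits Pretriangulated Triangulated Opposite

namespace DGP

universe v u

variable {C : Type u} [Category.{v} C] [Preadditive C] [HasZeroObject C] [HasShift C ℤ]
  [∀ n : ℤ, (shiftFunctor C n).Additive] [Pretriangulated C]

/-- A morphism `f : A ⟶ B` is a t-monomorphism if its cone lies in `T_{≥0}`. -/
def IsTMono (t : TStructure C) {A B : C} (f : A ⟶ B) : Prop :=
  ∃ (Z : C) (g : B ⟶ Z) (h : Z ⟶ A⟦(1 : ℤ)⟧),
    Triangle.mk f g h ∈ (distTriang C) ∧ t.ge 0 Z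

/-- A morphism `f : A ⟶ B` is a t-epimorphism if `cone(f)[-1]` lies in `T_{≤0}`,
equivalently it fits in a distinguished triangle `Z ⟶ A ⟶ B` with `Z ∈ T_{≤0}`. -/
def IsTEpi (t : TStructure C) {A B : C} (f : A ⟶ B) : Prop :=
  ∃ (Z : C) (g : Z ⟶ A) (h : B ⟶ Z⟦(1 : ℤ)⟧),
    Triangle.mk g f h ∈ (distTriang C) ∧ t.le 0 Z

/-- The heart of a t-structure, as a full subcategory. -/
abbrev Heart (t : TStructure C) := ObjectProperty.FullSubcategory (fun X => t.le 0 X ∧ t.ge 0 X)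

/-- The inclusion of the heart. -/
abbrev heartι (t : TStructure C) : Heart t ⥤ C := ObjectProperty.ι _

/-- Truncation data for a t-structure: truncation functors `τ≤n`, `τ≥n` together with
their universal properties and the truncation distinguished triangles. -/
structure TruncData (t : TStructure C) where
  τle : ℤ → C ⥤ C
  τge : ℤ → C ⥤ C
  τleLE : ∀ (n : ℤ) (X : C), t.le n ((τle n).obj X)
  τgeGE : ∀ (n : ℤ) (X : C), t.ge n ((τge n).obj X)
  ι : ∀ n : ℤ, τle n ⟶ 𝟭 C
  π : ∀ n : ℤ, 𝟭 C ⟶ τge n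
  le_univ : ∀ (n : ℤ) (X Y : C), t.le n X →
    Function.Bijective (fun (f : X ⟶ (τle n).obj Y) => f ≫ (ι n).app Y)
  ge_univ : ∀ (n : ℤ) (X Y : C), t.ge n Y →
    Function.Bijective (fun (f : (τge n).obj X ⟶ Y) => (π n).app X ≫ f)
  δ : ∀ (n : ℤ) (X : C), (τge (n + 1)).obj X ⟶ ((τle n).obj X)⟦(1 : ℤ)⟧
  tri : ∀ (n : ℤ) (X : C),
    Triangle.mk ((ι n).app X) ((π (n + 1)).app X) (δ n X) ∈ distTriang C
  τge_LE : ∀ (n m : ℤ) (X : C), t.le m X → t.le m ((τge n).obj X)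

variable {t : TStructure C}

/-- The cohomological functor `H^0 = τ≥0 τ≤0 : C ⥤ Heart t`. -/
def H0 (d : TruncData t) : C ⥤ Heart t :=
  ObjectProperty.lift _ (d.τle 0 ⋙ d.τge 0)
    (fun X => ⟨d.τge_LE 0 0 _ (d.τleLE 0 X), d.τgeGE 0 _⟩)

/-- The cohomology functors `H^n(X) = H^0(X⟦n⟧)`. -/
def Hn (d : TruncData t) (n : ℤ) : C ⥤ Heart t :=
  shiftFunctor C n ⋙ H0 d

/-- An object `E` is a derived injective if there is an injective object `I` of the heart
and a natural isomorphism `T(−, E) ≅ T^♥(H^0(−), I)`. -/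
def IsDerivedInjective (d : TruncData t) (E : C) : Prop :=
  ∃ I : Heart t, Injective I ∧ Nonempty (yoneda.obj E ≅ (H0 d).op ⋙ yoneda.obj I)

/-- The t-structure is non-degenerate if objects with vanishing cohomologies are zero. -/
def NonDegenerate (d : TruncData t) : Prop :=
  ∀ X : C, (∀ n : ℤ, IsZero ((Hn d n).obj X)) → IsZero X

section

variable {D : Type*} [Category D] [Preadditive D]

lemma eq_zero_of_equiv {X Y X' Y' : D} (e : (X ⟶ Y) ≃ (X' ⟶ Y'))
    (h : ∀ f : X ⟶ Y, f = 0) (g : X' ⟶ Y') : g = 0 :=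
  e.symm.injective ((h _).trans (h _).symm)

lemma hom_shift_eq_zero [HasShift D ℤ] {A B : D} (a : ℤ) (h : ∀ f : A⟦-a⟧ ⟶ B, f = 0)
    (g : A ⟶ B⟦a⟧) : g = 0 :=
  eq_zero_of_equiv ((shiftEquiv D a).symm.toAdjunction.homEquiv A B) h g

end

lemma ge_shift_iff (a n n' : ℤ) (h : a + n = n') (X : C) : t.ge n (X⟦a⟧) ↔ t.ge n' X := by
  rw [← t.shift_ge a n n' h, ObjectProperty.prop_shift_iff]

lemma ge_iff_orthogonal (n : ℤ) (X : C) :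
    t.ge n X ↔ ∀ (W : C), t.le (n - 1) W → ∀ f : W ⟶ X, f = 0 := by
  rw [t.ge_iff_isGE, t.isGE_iff_orthogonal (n - 1) n (by omega)]
  exact ⟨fun h W hW f => h W f ⟨hW⟩, fun h W f hW => h W hW.le f⟩

lemma ge_obj₃_of_distTriang {T : Triangle C} (hT : T ∈ distTriang C) {n : ℤ}
    (h₂ : t.ge n T.obj₂)
    (h₁ : ∀ W, t.le n W → ∀ x : W ⟶ T.obj₁, x ≫ T.mor₁ = 0 → x = 0) : t.ge n T.obj₃ := by
  rw [← ge_shift_iff (-1) (n + 1) n (by omega), ge_iff_orthogonal, add_sub_cancel_right]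
  intro W hW (x : W ⟶ T.invRotate.obj₁)
  have hx : x ≫ T.invRotate.mor₁ = 0 := h₁ W hW _ ((Category.assoc _ _ _).trans
    ((x ≫= comp_distTriang_mor_zero₁₂ _ (inv_rot_of_distTriang _ hT)).trans comp_zero))
  -- `T.obj₂⟦-1⟧ ⟶ T.obj₃⟦-1⟧ ⟶ T.obj₁ ⟶ T.obj₂⟦-1⟧⟦1⟧` is distinguished
  obtain ⟨g, rfl⟩ := Triangle.coyoneda_exact₂ _
    (inv_rot_of_distTriang _ (inv_rot_of_distTriang _ hT)) x hx
  rw [t.zero_of_isLE_of_isGE g n (n + 1) (by omega) ⟨hW⟩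
    ⟨t.ge_shift n (-1) (n + 1) (by omega) _ h₂⟩]
  exact zero_comp

namespace TruncData

variable (d : TruncData t)

lemma ι_cancel {n : ℤ} {X Y : C} (hX : t.le n X) {f g : X ⟶ (d.τle n).obj Y}
    (h : f ≫ (d.ι n).app Y = g ≫ (d.ι n).app Y) : f = g :=
  (d.le_univ n X Y hX).injective h

lemma π_cancel {n : ℤ} {X Y : C} (hY : t.ge n Y) {f g : (d.τge n).obj X ⟶ Y}
    (h : (d.π n).app X ≫ f = (d.π n).app X ≫ g) : f = g :=
  (d.ge_univ n X Y hY).injective h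

lemma isIso_ι_app {n : ℤ} {X : C} (hX : t.le n X) : IsIso ((d.ι n).app X) := by
  obtain ⟨j, hj⟩ := (d.le_univ n X X hX).surjective (𝟙 X)
  exact ⟨j, d.ι_cancel (d.τleLE n X) (by simp [hj]), hj⟩

lemma isIso_π_app {n : ℤ} {X : C} (hX : t.ge n X) : IsIso ((d.π n).app X) := by
  obtain ⟨j, hj⟩ := (d.ge_univ n X X hX).surjective (𝟙 X)
  exact ⟨j, hj, d.π_cancel (d.τgeGE n X) (by simp [reassoc_of% hj])⟩

lemma ge_τle_obj {n : ℤ} {X : C} (hX : t.ge n X) : t.ge n ((d.τle n).obj X) := by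
  rw [ge_iff_orthogonal]
  intro W hW f
  apply d.ι_cancel (t.le_monotone (by omega) _ hW)
  rw [zero_comp]
  exact t.zero_of_isLE_of_isGE _ (n - 1) n (by omega) ⟨hW⟩ ⟨hX⟩

lemma isZero_τle_obj {n : ℤ} {X : C} (hX : t.ge (n + 1) X) : IsZero ((d.τle n).obj X) := by
  rw [IsZero.iff_id_eq_zero]
  apply d.ι_cancel (d.τleLE n X)
  rw [zero_comp]
  exact t.zero_of_isLE_of_isGE _ n (n + 1) (by omega) ⟨d.τleLE n X⟩ ⟨hX⟩

lemma isZero_τge_obj {n : ℤ} {X : C} (hX : t.le (n - 1) X) : IsZero ((d.τge n).obj X) := by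
  rw [IsZero.iff_id_eq_zero]
  apply d.π_cancel (d.τgeGE n X)
  rw [comp_zero]
  exact t.zero_of_isLE_of_isGE _ (n - 1) n (by omega) ⟨hX⟩ ⟨d.τgeGE n X⟩

end TruncData

lemma isZero_of_isZero_obj {X : Heart t} (h : IsZero X.obj) : IsZero X :=
  IsZero.of_full_of_faithful_of_isZero (heartι t) X h

variable (d : TruncData t)

lemma isZero_H0_obj_of_ge_one {X : C} (hX : t.ge 1 X) : IsZero ((H0 d).obj X) :=
  isZero_of_isZero_obj (d.isZero_τge_obj (t.isLE_of_isZero (d.isZero_τle_obj hX) (0 - 1)).le)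

lemma isZero_H0_obj_of_le_neg_one {X : C} (hX : t.le (-1) X) : IsZero ((H0 d).obj X) := by
  have := d.isIso_ι_app (t.le_monotone (show (-1 : ℤ) ≤ 0 by omega) _ hX)
  exact isZero_of_isZero_obj
    (d.isZero_τge_obj ((t.le (-1)).prop_of_iso (asIso ((d.ι 0).app X)).symm hX))

lemma isZero_of_forall_ge (hnd : NonDegenerate d) {X : C} (h : ∀ n, t.ge n X) : IsZero X :=
  hnd X fun n => isZero_H0_obj_of_ge_one d (t.ge_shift (n + 1) n 1 (by omega) X (h (n + 1)))

noncomputable def toH0 (A : C) : (d.τle 0).obj A ⟶ ((H0 d).obj A).obj :=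
  (d.π 0).app ((d.τle 0).obj A)

lemma toH0_cancel {A Y : C} (hY : t.ge 0 Y) {f g : ((H0 d).obj A).obj ⟶ Y}
    (h : toH0 d A ≫ f = toH0 d A ≫ g) : f = g :=
  d.π_cancel hY h

lemma isIso_toH0 {E : C} (hE : t.ge 0 E) : IsIso (toH0 d E) :=
  d.isIso_π_app (d.ge_τle_obj hE)

noncomputable def fromH0 {E : C} (hE : t.ge 0 E) : ((H0 d).obj E).obj ⟶ E :=
  haveI := isIso_toH0 d hE
  inv (toH0 d E) ≫ (d.ι 0).app E

lemma fromH0_bijective {V E : C} (hV : t.le 0 V) (hE : t.ge 0 E) :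
    Function.Bijective (fun f : V ⟶ ((H0 d).obj E).obj => f ≫ fromH0 d hE) := by
  have := isIso_toH0 d hE
  simpa [Function.comp_def, fromH0] using
    (d.le_univ 0 V E hV).comp (asIso (inv (toH0 d E))).homToEquiv.bijective

lemma ι_app_comp_eq_toH0_comp {A E : C} (hE : t.ge 0 E) (g : A ⟶ E) :
    (d.ι 0).app A ≫ g = toH0 d A ≫ ((H0 d).map g).hom ≫ fromH0 d hE := by
  have := isIso_toH0 d hE
  have hπ : (d.τle 0).map g ≫ toH0 d E = toH0 d A ≫ ((H0 d).map g).hom :=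
    (d.π 0).naturality ((d.τle 0).map g)
  rw [fromH0, ← reassoc_of% hπ]
  simp

lemma H0_map_bijective {A E : C} (hA : t.le 0 A) (hE : t.ge 0 E) :
    Function.Bijective (fun g : A ⟶ E => (H0 d).map g) := by
  have := d.isIso_ι_app hA
  refine ⟨fun g₁ g₂ h => ?_,
    fun h => ⟨inv ((d.ι 0).app A) ≫ toH0 d A ≫ h.hom ≫ fromH0 d hE, ?_⟩⟩
  · rw [← cancel_epi ((d.ι 0).app A), ι_app_comp_eq_toH0_comp d hE, ι_app_comp_eq_toH0_comp d hE g₂]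
    simp only at h
    rw [h]
  · ext
    apply toH0_cancel d ((H0 d).obj E).property.2
    apply (fromH0_bijective d (d.τleLE 0 A) hE).injective
    simp only [Category.assoc]
    rw [← ι_app_comp_eq_toH0_comp d hE, IsIso.hom_inv_id_assoc]

lemma hom_eq_zero_of_isZero_H0 {L : C} {I : Heart t}
    (α : yoneda.obj L ≅ (H0 d).op ⋙ yoneda.obj I) {W : C} (hW : IsZero ((H0 d).obj W))
    (f : W ⟶ L) : f = 0 :=
  (α.app (op W)).toEquiv.injective (hW.eq_of_src _ _)

lemma ge_zero_of_iso_yoneda {L : C} {I : Heart t}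
    (α : yoneda.obj L ≅ (H0 d).op ⋙ yoneda.obj I) : t.ge 0 L :=
  (ge_iff_orthogonal 0 L).2 fun _ hW =>
    hom_eq_zero_of_isZero_H0 d α (isZero_H0_obj_of_le_neg_one d hW)

lemma shift_neg_one_hom_eq_zero_of_iso_yoneda {L : C} {I : Heart t}
    (α : yoneda.obj L ≅ (H0 d).op ⋙ yoneda.obj I) {Z : C} (hZ : t.ge 0 Z) :
    ∀ f : Z⟦(-1 : ℤ)⟧ ⟶ L, f = 0 :=
  hom_eq_zero_of_isZero_H0 d α (isZero_H0_obj_of_ge_one d (t.ge_shift 0 (-1) 1 (by omega) Z hZ))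

lemma shift_neg_hom_eq_zero {E : C}
    (h : ∀ Z : C, t.ge 0 Z → ∀ f : Z⟦(-1 : ℤ)⟧ ⟶ E, f = 0) {Z : C} (hZ : t.ge 0 Z) {n : ℤ}
    (hn : 1 ≤ n) (f : Z⟦(-n : ℤ)⟧ ⟶ E) : f = 0 :=
  eq_zero_of_equiv (((shiftFunctorAdd' C (1 - n) (-1) (-n) (by omega)).app Z).homFromEquiv).symm
    (h _ (t.ge_antitone (by omega : (0 : ℤ) ≤ n - 1) _
      (t.ge_shift 0 (1 - n) (n - 1) (by omega) Z hZ))) f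

lemma eq_zero_of_comp_mono (d : TruncData t) {X Y : Heart t} (u : X ⟶ Y) [Mono u] {W : C}
    (hW : t.le 0 W) (x : W ⟶ X.obj) (hx : x ≫ u.hom = 0) : x = 0 := by
  obtain ⟨x', rfl⟩ := (d.ge_univ 0 W X.obj X.property.2).surjective x
  let W' : Heart t := ⟨(d.τge 0).obj W, d.τge_LE 0 0 W hW, d.τgeGE 0 W⟩
  have : (ObjectProperty.homMk x' : W' ⟶ X) = 0 := by
    rw [← cancel_mono u, zero_comp]
    ext
    exact d.π_cancel Y.property.2 (by simpa using hx)
  simp [show x' = 0 from congrArg InducedCategory.Hom.hom this]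

lemma injective_H0_obj {E : C} (hE : t.ge 0 E)
    (h : ∀ Z : Heart t, ∀ f : Z.obj⟦(-1 : ℤ)⟧ ⟶ E, f = 0) : Injective ((H0 d).obj E) := by
  constructor
  intro X Y g u _
  obtain ⟨Q, q, δ, hT⟩ := distinguished_cocone_triangle u.hom
  have hQ : t.le 0 Q ∧ t.ge 0 Q :=
    ⟨(t.isLE₂ _ (rot_of_distTriang _ hT) 0 ⟨Y.property.1⟩
      ⟨t.le_monotone (by omega : (-1 : ℤ) ≤ 0) _
        (t.le_shift 0 1 (-1) (by omega) _ X.property.1)⟩).le,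
     ge_obj₃_of_distTriang hT Y.property.2 fun W hW x hx => eq_zero_of_comp_mono d u hW x hx⟩
  -- `g` extends along `u` because `Q⟦-1⟧ ⟶ X ⟶ Y` is exact and `Q⟦-1⟧ ⟶ E` vanishes
  obtain ⟨ψ', hψ'⟩ := Triangle.yoneda_exact₂ _ (inv_rot_of_distTriang _ hT) (g.hom ≫ fromH0 d hE)
    (h ⟨Q, hQ⟩ _)
  obtain ⟨ψ, rfl⟩ := (fromH0_bijective d Y.property.1 hE).surjective ψ'
  refine ⟨ObjectProperty.homMk ψ, ?_⟩
  ext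
  exact (fromH0_bijective d X.property.1 hE).injective ((Category.assoc _ _ _).trans hψ'.symm)

section Generators

variable {κ : Type*} {G : κ → Heart t}

lemma ge_one_of_hom_eq_zero (d : TruncData t) (hG : (ObjectProperty.ofObj G).IsSeparating)
    {Y : C} (hY : t.ge 0 Y) (h : ∀ k (f : (G k).obj ⟶ Y), f = 0) : t.ge 1 Y := by
  let Z : Heart t := ⟨(d.τle 0).obj Y, d.τleLE 0 Y, d.ge_τle_obj hY⟩
  have hZ : IsZero Z := by
    rw [IsZero.iff_id_eq_zero]
    refine hG _ _ fun _ hX f => ?_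
    obtain ⟨k⟩ := hX
    rw [Category.comp_id, comp_zero]
    ext
    exact d.ι_cancel (G k).property.1 (by simpa using h k _)
  rw [ge_iff_orthogonal, sub_self]
  intro W hW f
  obtain ⟨f', rfl⟩ := (d.le_univ 0 W Y hW).surjective f
  simp [((heartι t).map_isZero hZ).eq_of_tgt f' 0]

lemma isZero_of_hom_shift_eq_zero (hG : (ObjectProperty.ofObj G).IsSeparating)
    (hnd : NonDegenerate d) {Y : C} (hY : t.ge 0 Y)
    (h : ∀ k (m : ℤ), 0 ≤ m → ∀ f : (G k).obj⟦(-m : ℤ)⟧ ⟶ Y, f = 0) : IsZero Y := by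
  have hge : ∀ m, 0 ≤ m → t.ge m Y := by
    intro m hm
    induction m, hm using Int.leInduction with
    | base => exact hY
    | succ m hm ih =>
      rw [← ge_shift_iff m 1 (m + 1) rfl]
      exact ge_one_of_hom_eq_zero d hG ((ge_shift_iff m 0 m (add_zero m) Y).2 ih)
        fun k => hom_shift_eq_zero m (h k m hm)
  exact isZero_of_forall_ge d hnd fun n =>
    t.ge_antitone (le_max_left n 0) _ (hge _ (le_max_right n 0))

lemma isIso_of_comp_bijective (hG : (ObjectProperty.ofObj G).IsSeparating)
    (hnd : NonDegenerate d) {E L : C} (φ : E ⟶ L) (hL : t.ge 0 L)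
    (hφ : ∀ A, t.le 0 A → Function.Bijective (fun g : A ⟶ E => g ≫ φ))
    (hGE : ∀ k (n : ℤ), 1 ≤ n → ∀ f : (G k).obj⟦(-n : ℤ)⟧ ⟶ E, f = 0)
    (hGL : ∀ k (n : ℤ), 1 ≤ n → ∀ f : (G k).obj⟦(-n : ℤ)⟧ ⟶ L, f = 0) : IsIso φ := by
  obtain ⟨Q, p, δ, hT⟩ := distinguished_cocone_triangle φ
  have hQ : t.ge 0 Q := ge_obj₃_of_distTriang hT hL fun W hW x hx =>
    (hφ W hW).injective (hx.trans zero_comp.symm)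
  refine (Triangle.isZero₃_iff_isIso₁ _ hT).1 (isZero_of_hom_shift_eq_zero d hG hnd hQ ?_)
  intro k m hm x
  obtain ⟨w, rfl⟩ := Triangle.coyoneda_exact₃ _ hT x (hom_shift_eq_zero 1
    (eq_zero_of_equiv ((shiftFunctorAdd' C (-m) (-1) (-(m + 1)) (by omega)).app _).homFromEquiv
      (hGE k (m + 1) (by omega))) _)
  rcases hm.eq_or_lt with rfl | hm
  · obtain ⟨z, rfl⟩ := (hφ _ (t.le_shift 0 _ 0 (by omega) _ (G k).property.1)).surjective w
    exact (Category.assoc _ _ _).trans ((z ≫= comp_distTriang_mor_zero₁₂ _ hT).trans comp_zero)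
  · rw [hGL k m hm w]
    exact zero_comp

end Generators

lemma exists_comp_bijective_of_iso_yoneda {E L : C} (hE : t.ge 0 E)
    (α : yoneda.obj L ≅ (H0 d).op ⋙ yoneda.obj ((H0 d).obj E)) :
    ∃ φ : E ⟶ L, ∀ A, t.le 0 A → Function.Bijective (fun g : A ⟶ E => g ≫ φ) := by
  refine ⟨α.inv.app (op E) (𝟙 _), fun A hA => ?_⟩
  have key : α.hom.app (op A) ∘ (fun g : A ⟶ E => g ≫ α.inv.app (op E) (𝟙 _)) =
      fun g => (H0 d).map g := by
    funext g
    simpa using types_congr_hom (α.hom.naturality g.op) (α.inv.app (op E) (𝟙 _))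
  exact (Function.Bijective.of_comp_iff' (α.app (op A)).toEquiv.bijective _).1
    (key ▸ H0_map_bijective d hA hE)

end DGP

open DGP

/-- Let `T` be a triangulated category with a non-degenerate t-structure which has derived
injectives, and assume the heart has a small separating family `G : κ → T^♥` (the functors
`Hom(G k, −)` are jointly faithful). Then for `E ∈ T` the following are equivalent:
(1) `E` is a derived injective;
(2) `E ∈ T_{≥0}` and `T(Z[-1], E) ≅ 0` for every `Z ∈ T_{≥0}`;
(3) `E ∈ T_{≥0}` and `T(Z[-n], E) ≅ 0` for every `Z ∈ T^♥` and every `n ≥ 1`;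
(4) `E ∈ T_{≥0}`, `H^0(E)` is injective in `T^♥`, and `T(G k[-n], E) ≅ 0` for every `k`
    and every `n ≥ 1`. -/
theorem stmt18 {C : Type u} [Category.{v} C]
    [Preadditive C] [HasZeroObject C] [HasShift C ℤ] [∀ n : ℤ, (shiftFunctor C n).Additive]
    [Pretriangulated C]
    (t : TStructure C) (d : TruncData t)
    (hnd : NonDegenerate d)
    (hdi : ∀ I : Heart t, Injective I →
      ∃ L : C, Nonempty (yoneda.obj L ≅ (H0 d).op ⋙ yoneda.obj I))
    (κ : Type v) (G : κ → Heart t)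
    (hsep : ∀ (X Y : Heart t) (f g : X ⟶ Y),
      (∀ (k : κ) (h : G k ⟶ X), h ≫ f = h ≫ g) → f = g)
    (E : C) :
    List.TFAE
      [ IsDerivedInjective d E,
        t.ge 0 E ∧ ∀ (Z : C), t.ge 0 Z → ∀ f : Z⟦(-1 : ℤ)⟧ ⟶ E, f = 0,
        t.ge 0 E ∧ ∀ (Z : Heart t) (n : ℤ), 1 ≤ n →
          ∀ f : ((heartι t).obj Z)⟦(-n : ℤ)⟧ ⟶ E, f = 0,
        t.ge 0 E ∧ Injective ((H0 d).obj E) ∧ ∀ (k : κ) (n : ℤ), 1 ≤ n →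
          ∀ f : ((heartι t).obj (G k))⟦(-n : ℤ)⟧ ⟶ E, f = 0 ] := by
  have hG : (ObjectProperty.ofObj G).IsSeparating := fun X Y f g h =>
    hsep X Y f g fun k => h _ (ObjectProperty.ofObj_apply G k)
  tfae_have 1 → 2 := by
    rintro ⟨I, -, ⟨α⟩⟩
    exact ⟨ge_zero_of_iso_yoneda d α, fun Z hZ => shift_neg_one_hom_eq_zero_of_iso_yoneda d α hZ⟩
  tfae_have 2 → 3 := fun ⟨hE, h⟩ => ⟨hE, fun Z _ hn => shift_neg_hom_eq_zero h Z.property.2 hn⟩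
  tfae_have 3 → 4 := fun ⟨hE, h⟩ =>
    ⟨hE, injective_H0_obj d hE fun Z => h Z 1 le_rfl, fun k => h (G k)⟩
  tfae_have 4 → 1 := by
    rintro ⟨hE, hinj, h⟩
    obtain ⟨L, ⟨α⟩⟩ := hdi _ hinj
    obtain ⟨φ, hφ⟩ := exists_comp_bijective_of_iso_yoneda d hE α
    have hL : ∀ (k : κ) (n : ℤ), 1 ≤ n → ∀ f : (G k).obj⟦(-n : ℤ)⟧ ⟶ L, f = 0 := fun k _ hn =>
      shift_neg_hom_eq_zero (fun _ hZ => shift_neg_one_hom_eq_zero_of_iso_yoneda d α hZ)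
        (G k).property.2 hn
    have := isIso_of_comp_bijective d hG hnd φ (ge_zero_of_iso_yoneda d α) hφ h hL
    exact ⟨_, hinj, ⟨yoneda.mapIso (asIso φ) ≪≫ α⟩⟩
  tfae_finish
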